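/- Let m > 0, k > 0, T > 0, α ∈ (0,1), n ≥ 1, Δt = T/n, t_k = kT/n, and b(x) = (m + 1/2)·x⁻¹ − (k/2)·x. Let M : [0,T] → ℝ and let z : [0,T] → ℝ be α-Hölder continuous with constant K and satisfy z_t = z_0 + ∫_0^t b(z_s) ds + (M_t − M_0) for all t ∈ [0,T], with inf_{t∈[0,T]} z_t > 0. Let (z_k^n)_{k=0,…,n} be positive reals with z_0^n = z_0 satisfying z_{k+1}^n = z_k^n + b(z_{k+1}^n)·Δt + (M(t_{k+1}) − M(t_k)). Suppose all values z_t (t ∈ [0,T]) and z_k^n (0 ≤ k ≤ n) lie in a compact interval [a, A] ⊂ (0,∞), and let L be a Lipschitz constant of b on [a, A]. Then max_{0 ≤ k ≤ n} | z_k^n − z_{t_k} | ≤ L·K·T^{1+α} / ((1 + α)·n^α). -/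

import Mathlib

/-!
The error `e_i = z_i^n - z(t_i)` of the implicit scheme satisfies
`e_{i+1} = e_i + (b(z_{i+1}^n) - b(z(t_{i+1}))) Δt + R_i`, where
`R_i = b(z(t_{i+1})) Δt - ∫ b(z_s) ds` over `[t_i, t_{i+1}]`. Since `b` is decreasing, the middle term has the sign opposite to `e_{i+1}`,
so `|e_{i+1}| ≤ |e_i + R_i|`. The Hölder bound on `z` and the Lipschitz bound on `b` give
`|R_i| ≤ L K Δt^{1+α} / (1+α)`, and summing over at most `n` steps gives the estimate.
-/

open Set Filter Topology MeasureTheory intervalIntegral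

theorem continuousOn_of_dist_le_mul_rpow {X Y : Type*} [PseudoMetricSpace X]
    [PseudoMetricSpace Y] {f : X → Y} {s : Set X} {K α : ℝ} (hα : 0 < α)
    (hf : ∀ x ∈ s, ∀ y ∈ s, dist (f y) (f x) ≤ K * dist y x ^ α) : ContinuousOn f s := by
  intro x hx
  rw [ContinuousWithinAt, tendsto_iff_dist_tendsto_zero]
  have hbound : Tendsto (fun y => K * dist y x ^ α) (𝓝[s] x) (𝓝 0) := by
    have hcont : Continuous fun y => K * dist y x ^ α :=
      continuous_const.mul
        ((continuous_id.dist continuous_const).rpow_const fun _ => Or.inr hα.le)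
    simpa [Real.zero_rpow hα.ne'] using (hcont.tendsto x).mono_left nhdsWithin_le_nhds
  exact squeeze_zero' (Eventually.of_forall fun _ => dist_nonneg)
    (eventually_nhdsWithin_of_forall fun y hy => hf x hx y hy) hbound

theorem antitoneOn_mul_inv_sub_mul {c d : ℝ} (hc : 0 ≤ c) (hd : 0 ≤ d) :
    AntitoneOn (fun x => c * x⁻¹ - d * x) (Ioi 0) := by
  intro x hx y _ hxy
  have hinv : c * y⁻¹ ≤ c * x⁻¹ := by gcongr
  have hlin : d * x ≤ d * y := by gcongr
  simp only
  linarith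

theorem AntitoneOn.abs_sub_le_of_sub_eq {f : ℝ → ℝ} {s : Set ℝ} (hf : AntitoneOn f s)
    {x y d Δ : ℝ} (hx : x ∈ s) (hy : y ∈ s) (hΔ : 0 ≤ Δ)
    (h : x - y = d + (f x - f y) * Δ) : |x - y| ≤ |d| := by
  have hsign : (f x - f y) * (x - y) ≤ 0 := (antivaryOn_id_iff.2 hf).sub_mul_sub_nonpos hy hx
  have hsq : (x - y) * (x - y) = (x - y) * d + (f x - f y) * (x - y) * Δ := by
    linear_combination (x - y) * h
  have hcross : (x - y) * d ≤ |x - y| * |d| := (le_abs_self _).trans (abs_mul _ _).le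
  have hsq_le : |x - y| * |x - y| ≤ |x - y| * |d| := by
    rw [abs_mul_abs_self]
    nlinarith [mul_nonpos_of_nonpos_of_nonneg hsign hΔ]
  nlinarith [abs_nonneg (x - y), abs_nonneg d]

theorem abs_mul_sub_integral_le_of_rpow {g : ℝ → ℝ} {t₀ t₁ C α : ℝ} (ht : t₀ ≤ t₁)
    (hα : 0 ≤ α) (hg : IntervalIntegrable g volume t₀ t₁)
    (h : ∀ s ∈ Icc t₀ t₁, |g t₁ - g s| ≤ C * (t₁ - s) ^ α) :
    |g t₁ * (t₁ - t₀) - ∫ s in t₀..t₁, g s| ≤ C * (t₁ - t₀) ^ (1 + α) / (1 + α) := by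
  have hpow : IntervalIntegrable (fun s => C * (t₁ - s) ^ α) volume t₀ t₁ :=
    (continuous_const.mul ((continuous_const.sub continuous_id).rpow_const
      fun _ => Or.inr hα)).intervalIntegrable _ _
  calc |g t₁ * (t₁ - t₀) - ∫ s in t₀..t₁, g s| = |∫ s in t₀..t₁, (g t₁ - g s)| := by
        rw [integral_sub intervalIntegrable_const hg, intervalIntegral.integral_const,
          smul_eq_mul, mul_comm]
    _ ≤ ∫ s in t₀..t₁, |g t₁ - g s| := abs_integral_le_integral_abs ht
    _ ≤ ∫ s in t₀..t₁, C * (t₁ - s) ^ α :=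
        integral_mono_on ht (intervalIntegrable_const.sub hg).abs hpow h
    _ = C * (t₁ - t₀) ^ (1 + α) / (1 + α) := by
        rw [intervalIntegral.integral_const_mul, integral_comp_sub_left (fun u => u ^ α), sub_self,
          integral_rpow (Or.inl (by linarith)), Real.zero_rpow (by linarith), add_comm α 1]
        ring

theorem eq_add_integral_add_sub_of_forall {f z M : ℝ → ℝ} {T t₀ t₁ : ℝ}
    (hf : ContinuousOn f (Icc 0 T))
    (h : ∀ t ∈ Icc 0 T, z t = z 0 + (∫ s in (0:ℝ)..t, f s) + (M t - M 0))
    (ht₀ : t₀ ∈ Icc 0 T) (ht₁ : t₁ ∈ Icc 0 T) :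
    z t₁ = z t₀ + (∫ s in t₀..t₁, f s) + (M t₁ - M t₀) := by
  have h0 : (0:ℝ) ∈ Icc 0 T := ⟨le_rfl, ht₀.1.trans ht₀.2⟩
  have hint : ∀ {u v : ℝ}, u ∈ Icc 0 T → v ∈ Icc 0 T → IntervalIntegrable f volume u v :=
    fun hu hv => (hf.mono (uIcc_subset_Icc hu hv)).intervalIntegrable
  rw [h t₁ ht₁, h t₀ ht₀, ← integral_interval_sub_left (hint h0 ht₁) (hint h0 ht₀)]
  ring

theorem abs_comp_sub_le_mul_rpow {b z : ℝ → ℝ} {s S : Set ℝ} {L K α : ℝ} (hL : 0 ≤ L)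
    (hzS : MapsTo z s S) (hb : ∀ x ∈ S, ∀ y ∈ S, |b x - b y| ≤ L * |x - y|)
    (hz : ∀ u ∈ s, ∀ t ∈ s, |z t - z u| ≤ K * |t - u| ^ α) {u t : ℝ} (hu : u ∈ s) (ht : t ∈ s) :
    |b (z t) - b (z u)| ≤ L * K * |t - u| ^ α :=
  calc |b (z t) - b (z u)| ≤ L * |z t - z u| := hb _ (hzS ht) _ (hzS hu)
    _ ≤ L * (K * |t - u| ^ α) := by gcongr; exact hz u hu t ht
    _ = L * K * |t - u| ^ α := by ring

theorem abs_implicitEuler_sub_le {b z : ℝ → ℝ} {S : Set ℝ} (hb : AntitoneOn b S)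
    {t₀ t₁ x₀ x w C α : ℝ} (ht : t₀ ≤ t₁) (hα : 0 ≤ α) (hx : x ∈ S) (hzS : z t₁ ∈ S)
    (hint : IntervalIntegrable (fun s => b (z s)) volume t₀ t₁)
    (hholder : ∀ s ∈ Icc t₀ t₁, |b (z t₁) - b (z s)| ≤ C * (t₁ - s) ^ α)
    (hz : z t₁ = z t₀ + (∫ s in t₀..t₁, b (z s)) + w)
    (hx_eq : x = x₀ + b x * (t₁ - t₀) + w) :
    |x - z t₁| ≤ |x₀ - z t₀| + C * (t₁ - t₀) ^ (1 + α) / (1 + α) := by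
  set R := b (z t₁) * (t₁ - t₀) - ∫ s in t₀..t₁, b (z s)
  have hR : |R| ≤ C * (t₁ - t₀) ^ (1 + α) / (1 + α) :=
    abs_mul_sub_integral_le_of_rpow ht hα hint hholder
  calc |x - z t₁| ≤ |x₀ - z t₀ + R| :=
        hb.abs_sub_le_of_sub_eq hx hzS (sub_nonneg.2 ht) (by linear_combination hx_eq - hz)
    _ ≤ |x₀ - z t₀| + |R| := abs_add_le _ _
    _ ≤ _ := by gcongr

theorem le_mul_of_succ_le_add {u : ℕ → ℝ} {n : ℕ} {C : ℝ} (h0 : u 0 ≤ 0)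
    (h : ∀ i < n, u (i + 1) ≤ u i + C) : ∀ i ≤ n, u i ≤ i * C := by
  intro i hi
  induction i with
  | zero => simpa using h0
  | succ i ih =>
    push_cast
    linarith [ih (by omega), h i (by omega)]

theorem stmt_4_general (m k T α : ℝ) (hm : 0 < m) (hk : 0 < k) (hT : 0 < T)
    (hα : α ∈ Set.Ioo (0:ℝ) 1) (n : ℕ) (hn : 1 ≤ n)
    (b : ℝ → ℝ) (hb : ∀ x : ℝ, 0 < x → b x = (m + 1/2) * x⁻¹ - (k/2) * x)
    (M z : ℝ → ℝ) (K : ℝ) (hK : 0 ≤ K)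
    (hzHolder : ∀ s ∈ Set.Icc (0:ℝ) T, ∀ t ∈ Set.Icc (0:ℝ) T,
      |z t - z s| ≤ K * |t - s| ^ α)
    (hzeq : ∀ t ∈ Set.Icc (0:ℝ) T,
      z t = z 0 + (∫ s in (0:ℝ)..t, b (z s)) + (M t - M 0))
    (a A : ℝ)
    (hzmem : ∀ t ∈ Set.Icc (0:ℝ) T, z t ∈ Set.Icc a A)
    (hzpos : ∀ t ∈ Set.Icc (0:ℝ) T, 0 < z t)
    (zn : ℕ → ℝ) (hzn0 : zn 0 = z 0)
    (hrec : ∀ i < n, 0 < zn (i+1) ∧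
      zn (i+1) = zn i + b (zn (i+1)) * (T / n)
        + (M (((i:ℝ)+1) * T / n) - M ((i:ℝ) * T / n)))
    (L : ℝ) (hL : 0 ≤ L)
    (hLip : ∀ x ∈ Set.Icc a A, ∀ y ∈ Set.Icc a A, |b x - b y| ≤ L * |x - y|) :
    ∀ i ≤ n, |zn i - z ((i:ℝ) * T / n)| ≤ L * K * T ^ (1 + α) / ((1 + α) * (n:ℝ) ^ α) := by
  have hn0 : (0:ℝ) < n := by exact_mod_cast hn
  have hgrid : ∀ j ≤ n, (j:ℝ) * T / n ∈ Icc 0 T := fun j hj =>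
    ⟨by positivity, (div_le_iff₀ hn0).2 (by rw [mul_comm T]; gcongr)⟩
  have hz : ContinuousOn z (Icc 0 T) :=
    continuousOn_of_dist_le_mul_rpow hα.1 (by simpa only [Real.dist_eq] using hzHolder)
  have hbz : ContinuousOn (fun s => b (z s)) (Icc 0 T) :=
    (LipschitzOnWith.of_dist_le' (K := L)
      (by simpa only [Real.dist_eq] using hLip)).continuousOn.comp hz hzmem
  have hanti : AntitoneOn b (Ioi 0) :=
    (antitoneOn_mul_inv_sub_mul (by linarith) (by linarith)).congr fun x hx => (hb x hx).symm
  have hstep : ∀ j < n, |zn (j + 1) - z (((j + 1 : ℕ) : ℝ) * T / n)|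
      ≤ |zn j - z ((j:ℝ) * T / n)| + L * K * (T / n) ^ (1 + α) / (1 + α) := by
    intro j hj
    obtain ⟨hpos, hzn⟩ := hrec j hj
    have ht₀ := hgrid j hj.le
    have ht₁ : ((j:ℝ) + 1) * T / n ∈ Icc 0 T := by exact_mod_cast hgrid (j + 1) hj
    have hΔ : ((j:ℝ) + 1) * T / n - j * T / n = T / n := by ring
    push_cast
    rw [← hΔ] at hzn ⊢
    refine abs_implicitEuler_sub_le hanti (by gcongr; linarith) hα.1.le hpos (hzpos _ ht₁)
      (hbz.mono (uIcc_subset_Icc ht₀ ht₁)).intervalIntegrable (fun s hs => ?_)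
      (eq_add_integral_add_sub_of_forall hbz hzeq ht₀ ht₁) hzn
    simpa only [abs_of_nonneg (sub_nonneg.2 hs.2)] using
      abs_comp_sub_le_mul_rpow hL hzmem hLip hzHolder (Icc_subset_Icc ht₀.1 ht₁.2 hs) ht₁
  intro i hi
  calc _ ≤ i * (L * K * (T / n) ^ (1 + α) / (1 + α)) :=
        le_mul_of_succ_le_add (u := fun i => |zn i - z ((i:ℝ) * T / n)|)
          (by simp [hzn0]) hstep i hi
    _ ≤ n * (L * K * (T / n) ^ (1 + α) / (1 + α)) :=
        mul_le_mul_of_nonneg_right (by exact_mod_cast hi)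
          (div_nonneg (by positivity) (by linarith [hα.1]))
    _ = _ := by
        rw [Real.div_rpow hT.le hn0.le, Real.rpow_add hn0 1 α, Real.rpow_one]
        field_simp

/-- Grid-point error estimate for the implicit Euler scheme for the singular
equation `dz = b(z) dt + dM`, `b x = (m + 1/2) x⁻¹ - (k/2) x`: if the exact solution `z` is
`α`-Hölder with constant `K`, all values of `z` and of the scheme lie in a compact interval
`[a, A] ⊂ (0,∞)` on which `b` is `L`-Lipschitz, then
`max_k |z_k^n - z(t_k)| ≤ L K T^{1+α} / ((1+α) n^α)`. -/
theorem stmt_4 (m k T α : ℝ) (hm : 0 < m) (hk : 0 < k) (hT : 0 < T)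
    (hα : α ∈ Set.Ioo (0:ℝ) 1) (n : ℕ) (hn : 1 ≤ n)
    (b : ℝ → ℝ) (hb : ∀ x : ℝ, 0 < x → b x = (m + 1/2) * x⁻¹ - (k/2) * x)
    (M z : ℝ → ℝ) (K : ℝ) (hK : 0 ≤ K)
    (hzHolder : ∀ s ∈ Set.Icc (0:ℝ) T, ∀ t ∈ Set.Icc (0:ℝ) T,
      |z t - z s| ≤ K * |t - s| ^ α)
    (hzeq : ∀ t ∈ Set.Icc (0:ℝ) T,
      z t = z 0 + (∫ s in (0:ℝ)..t, b (z s)) + (M t - M 0))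
    (a A : ℝ) (ha : 0 < a) (haA : a ≤ A)
    (hzmem : ∀ t ∈ Set.Icc (0:ℝ) T, z t ∈ Set.Icc a A)
    (hzpos : ∀ t ∈ Set.Icc (0:ℝ) T, 0 < z t)
    (zn : ℕ → ℝ) (hzn0 : zn 0 = z 0)
    (hznmem : ∀ i ≤ n, zn i ∈ Set.Icc a A)
    (hrec : ∀ i < n, 0 < zn (i+1) ∧
      zn (i+1) = zn i + b (zn (i+1)) * (T / n)
        + (M (((i:ℝ)+1) * T / n) - M ((i:ℝ) * T / n)))
    (L : ℝ) (hL : 0 ≤ L)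
    (hLip : ∀ x ∈ Set.Icc a A, ∀ y ∈ Set.Icc a A, |b x - b y| ≤ L * |x - y|) :
    ∀ i ≤ n, |zn i - z ((i:ℝ) * T / n)| ≤ L * K * T ^ (1 + α) / ((1 + α) * (n:ℝ) ^ α) :=
  stmt_4_general m k T α hm hk hT hα n hn b hb M z K hK hzHolder hzeq a A hzmem hzpos zn hzn0 hrec L
    hL hLip
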